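/- For n >= 3, the permutations of {1,...,n} that avoid a nonconsecutive 321 pattern and whose first three entries are decreasing are in bijection with the permutations of {1,...,n-2} that avoid a nonconsecutive 321 pattern and do not begin with three decreasing entries; the bijection deletes the second and third entries (necessarily 2 and 1) and subtracts 2 from the remaining entries. -/

import Mathlib

/-- A permutation avoids a nonconsecutive 321 pattern if every occurrence of 321
(indices `i < j < k` with `π i > π j > π k`) occupies three consecutive positions. -/
def AvoidsNonconsec321 {n : ℕ} (π : Equiv.Perm (Fin n)) : Prop :=
  ∀ i j k : Fin n, i < j → j < k → π k < π j → π j < π i →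
    (j : ℕ) = (i : ℕ) + 1 ∧ (k : ℕ) = (i : ℕ) + 2

/-- The permutation starts with three decreasing entries. -/
def Dec3 {n : ℕ} (π : Equiv.Perm (Fin n)) : Prop :=
  ∃ h : 2 < n, π ⟨2, h⟩ < π ⟨1, by omega⟩ ∧ π ⟨1, by omega⟩ < π ⟨0, by omega⟩

/-!
Values and positions are counted from `0`. If `π` avoids nonconsecutive 321 patterns and
`π 0 > π 1 > π 2`, then no later entry lies below `π 1`, since it would form a nonconsecutive
321 with positions `0, 1`; hence `π 1 = 1` and `π 2 = 0`. Such `π` correspond to arbitrary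
`σ` via `π (skipPos i) = σ i + 2`, where `skipPos` (`0 ↦ 0`, `i ↦ i + 2`) is order preserving.
A 321 pattern of `π` is either `(0, 1, 2)` or the image of one of `σ`, and `skipPos` keeps a
triple consecutive exactly when it does not start at `0`. So `π` avoids nonconsecutive 321
patterns iff every 321 pattern of `σ` is consecutive and avoids position `0`, i.e. iff `σ`
avoids nonconsecutive 321 patterns and does not start with three decreasing entries.
-/

open Equiv

namespace Nonconsec321

theorem avoidsNonconsec321_and_not_dec3_iff {n : ℕ} (σ : Perm (Fin n)) :
    AvoidsNonconsec321 σ ∧ ¬Dec3 σ ↔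
      ∀ i j k : Fin n, i < j → j < k → σ k < σ j → σ j < σ i →
        0 < (i : ℕ) ∧ (j : ℕ) = i + 1 ∧ (k : ℕ) = i + 2 := by
  constructor
  · rintro ⟨hA, hD⟩ i j k hij hjk hkj hji
    obtain ⟨hj, hk⟩ := hA i j k hij hjk hkj hji
    refine ⟨Nat.pos_of_ne_zero fun hi ↦ hD ⟨by omega, ?_, ?_⟩, hj, hk⟩
    · convert hkj using 2 <;> exact Fin.ext (by simp; omega)
    · convert hji using 2 <;> exact Fin.ext (by simp; omega)
  · intro h
    refine ⟨fun i j k hij hjk hkj hji ↦ (h i j k hij hjk hkj hji).2, ?_⟩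
    rintro ⟨hn, h21, h10⟩
    have := h ⟨0, by omega⟩ ⟨1, by omega⟩ ⟨2, hn⟩
      (Fin.mk_lt_mk.2 zero_lt_one) (Fin.mk_lt_mk.2 one_lt_two) h21 h10
    simp at this

variable {m : ℕ}

theorem dec3_iff (π : Perm (Fin (m + 3))) : Dec3 π ↔ π 2 < π 1 ∧ π 1 < π 0 := by
  have h2 : (⟨2, by omega⟩ : Fin (m + 3)) = 2 := Fin.ext Fin.val_two.symm
  have h1 : (⟨1, by omega⟩ : Fin (m + 3)) = 1 := Fin.ext (Fin.val_one _).symm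
  simp only [Dec3, h2, h1, Fin.zero_eta, exists_prop, and_iff_right_iff_imp]
  intro
  omega

theorem apply_one_eq_one_and_apply_two_eq_zero {π : Perm (Fin (m + 3))}
    (h : AvoidsNonconsec321 π ∧ Dec3 π) : π 1 = 1 ∧ π 2 = 0 := by
  obtain ⟨hA, hD⟩ := h
  obtain ⟨h21, h10⟩ := (dec3_iff π).1 hD
  -- otherwise positions `0, 1, k` carry a nonconsecutive 321 pattern
  have below : ∀ k, π k < π 1 → k = 2 := by
    intro k hk
    by_contra hk2
    have hk0 : k ≠ 0 := by rintro rfl; exact lt_asymm hk h10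
    have hk1 : k ≠ 1 := by rintro rfl; exact lt_irrefl _ hk
    have := hA 0 1 k Fin.zero_lt_one ?_ hk h10
    all_goals simp only [Fin.lt_def, ne_eq, Fin.ext_iff, Fin.val_zero, Fin.val_one,
      Fin.val_two] at *
    all_goals omega
  have h2 : π 2 = 0 := by
    have := below (π.symm 0) (by simpa using (Fin.zero_le _).trans_lt h21)
    rw [← this, apply_symm_apply]
  refine ⟨?_, h2⟩
  by_contra h1
  have hlt : (1 : Fin (m + 3)) < π 1 := by
    simp only [Fin.lt_def, Fin.ext_iff, Fin.val_zero, Fin.val_one, h2] at h21 h1 ⊢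
    omega
  have := below (π.symm 1) (by simpa using hlt)
  rw [← this, apply_symm_apply] at h2
  simp at h2

def skipPos (i : Fin (m + 1)) : Fin (m + 3) :=
  if (i : ℕ) = 0 then 0 else ⟨i + 2, by omega⟩

theorem val_skipPos (i : Fin (m + 1)) :
    (skipPos i : ℕ) = if (i : ℕ) = 0 then 0 else (i : ℕ) + 2 := by
  unfold skipPos
  split_ifs <;> rfl

theorem skipPos_zero : skipPos (0 : Fin (m + 1)) = 0 := by
  simp [skipPos]

theorem skipPos_of_pos {i : Fin (m + 1)} (hi : 0 < (i : ℕ)) :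
    skipPos i = ⟨i + 2, by omega⟩ := by
  simp [skipPos, hi.ne']

theorem strictMono_skipPos : StrictMono (skipPos : Fin (m + 1) → Fin (m + 3)) := by
  intro i j hij
  rw [Fin.lt_def] at hij ⊢
  rw [val_skipPos, val_skipPos]
  split_ifs <;> omega

theorem skipPos_ne_one (i : Fin (m + 1)) : skipPos i ≠ 1 := by
  rw [ne_eq, Fin.ext_iff, val_skipPos, Fin.val_one]
  split <;> omega

theorem skipPos_ne_two (i : Fin (m + 1)) : skipPos i ≠ 2 := by
  rw [ne_eq, Fin.ext_iff, val_skipPos, Fin.val_two]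
  split <;> omega

/-- A left inverse of `skipPos`; truncated subtraction sends positions `0`, `1`, `2` to `0`. -/
def unskipPos (x : Fin (m + 3)) : Fin (m + 1) :=
  ⟨x - 2, by omega⟩

theorem unskipPos_skipPos (i : Fin (m + 1)) : unskipPos (skipPos i) = i := by
  ext
  simp only [unskipPos, val_skipPos]
  split_ifs <;> omega

theorem skipPos_unskipPos {x : Fin (m + 3)} (h1 : x ≠ 1) (h2 : x ≠ 2) :
    skipPos (unskipPos x) = x := by
  simp only [ne_eq, Fin.ext_iff, Fin.val_one, Fin.val_two] at h1 h2
  ext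
  simp only [unskipPos, val_skipPos]
  split_ifs <;> omega

theorem two_ne_one_fin : (2 : Fin (m + 3)) ≠ 1 := by
  rw [ne_eq, Fin.ext_iff, Fin.val_two, Fin.val_one]
  omega

theorem two_le_apply {π : Perm (Fin (m + 3))} (h1 : π 1 = 1) (h2 : π 2 = 0) {x : Fin (m + 3)}
    (hx1 : x ≠ 1) (hx2 : x ≠ 2) : 2 ≤ (π x : ℕ) := by
  by_contra hlt
  obtain h | h : π x = π 2 ∨ π x = π 1 := by
    simp only [h1, h2, Fin.ext_iff, Fin.val_zero, Fin.val_one]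
    omega
  exacts [hx2 (π.injective h), hx1 (π.injective h)]

def IsDeletion (π : Perm (Fin (m + 3))) (σ : Perm (Fin (m + 1))) : Prop :=
  (π 1 = 1 ∧ π 2 = 0) ∧ ∀ i, (π (skipPos i) : ℕ) = σ i + 2

namespace IsDeletion

variable {π π' : Perm (Fin (m + 3))} {σ σ' : Perm (Fin (m + 1))}

theorem skipPos_unskipPos (h : IsDeletion π σ) {x : Fin (m + 3)} (hx : 2 ≤ (π x : ℕ)) :
    skipPos (unskipPos x) = x := by
  refine Nonconsec321.skipPos_unskipPos ?_ ?_ <;> rintro rfl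
  · simp [h.1.1] at hx
  · simp [h.1.2] at hx

theorem lt_iff (h : IsDeletion π σ) (i j : Fin (m + 1)) :
    π (skipPos i) < π (skipPos j) ↔ σ i < σ j := by
  simp only [Fin.lt_def, h.2]
  omega

theorem dec3 (h : IsDeletion π σ) : Dec3 π := by
  have h0 := h.2 0
  rw [skipPos_zero] at h0
  rw [dec3_iff, h.1.1, h.1.2, Fin.lt_def, Fin.lt_def, h0]
  simp

theorem avoidsNonconsec321_iff (h : IsDeletion π σ) :
    AvoidsNonconsec321 π ↔ AvoidsNonconsec321 σ ∧ ¬Dec3 σ := by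
  rw [avoidsNonconsec321_and_not_dec3_iff]
  constructor
  · intro hA i j k hij hjk hkj hji
    have := hA _ _ _ (strictMono_skipPos hij) (strictMono_skipPos hjk)
      ((h.lt_iff k j).2 hkj) ((h.lt_iff j i).2 hji)
    simp only [val_skipPos, Fin.lt_def] at this hij hjk
    split_ifs at this <;> omega
  · intro hσ i j k hij hjk hkj hji
    by_cases hk : (k : ℕ) ≤ 2
    · simp only [Fin.lt_def] at hij hjk
      omega
    -- `k` lies outside positions `1, 2`, hence so do the larger entries at `i` and `j`
    have hk2 : 2 ≤ (π k : ℕ) := two_le_apply h.1.1 h.1.2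
      (fun h1 ↦ hk (by rw [h1, Fin.val_one]; omega)) (fun h2 ↦ hk (by rw [h2, Fin.val_two]))
    rw [Fin.lt_def] at hkj hji
    obtain ⟨k, rfl⟩ : ∃ k', skipPos k' = k := ⟨_, h.skipPos_unskipPos hk2⟩
    obtain ⟨j, rfl⟩ : ∃ j', skipPos j' = j := ⟨_, h.skipPos_unskipPos (by omega)⟩
    obtain ⟨i, rfl⟩ : ∃ i', skipPos i' = i := ⟨_, h.skipPos_unskipPos (by omega)⟩
    rw [strictMono_skipPos.lt_iff_lt] at hij hjk
    rw [← Fin.lt_def, h.lt_iff] at hkj hji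
    have := hσ _ _ _ hij hjk hkj hji
    simp only [val_skipPos]
    split_ifs <;> omega

theorem right_unique (h : IsDeletion π σ) (h' : IsDeletion π σ') : σ = σ' := by
  ext i
  have := h.2 i
  have := h'.2 i
  omega

theorem left_unique (h : IsDeletion π σ) (h' : IsDeletion π' σ) : π = π' := by
  ext x
  by_cases hx1 : x = 1
  · rw [hx1, h.1.1, h'.1.1]
  by_cases hx2 : x = 2
  · rw [hx2, h.1.2, h'.1.2]
  rw [← Nonconsec321.skipPos_unskipPos hx1 hx2, h.2, h'.2]

end IsDeletion

def deleteFun (π : Perm (Fin (m + 3))) (i : Fin (m + 1)) : Fin (m + 1) :=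
  ⟨π (skipPos i) - 2, by omega⟩

theorem injective_deleteFun {π : Perm (Fin (m + 3))} (h1 : π 1 = 1) (h2 : π 2 = 0) :
    Function.Injective (deleteFun π) := by
  intro i j hij
  have hi := two_le_apply h1 h2 (skipPos_ne_one i) (skipPos_ne_two i)
  have hj := two_le_apply h1 h2 (skipPos_ne_one j) (skipPos_ne_two j)
  rw [deleteFun, deleteFun, Fin.mk.injEq] at hij
  exact strictMono_skipPos.injective (π.injective (Fin.ext (by omega)))

noncomputable def deletion (π : Perm (Fin (m + 3))) (h : π 1 = 1 ∧ π 2 = 0) :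
    Perm (Fin (m + 1)) :=
  .ofBijective (deleteFun π) (Finite.injective_iff_bijective.mp (injective_deleteFun h.1 h.2))

theorem isDeletion_deletion {π : Perm (Fin (m + 3))} (h : π 1 = 1 ∧ π 2 = 0) :
    IsDeletion π (deletion π h) := by
  refine ⟨h, fun i ↦ ?_⟩
  have := two_le_apply h.1 h.2 (skipPos_ne_one i) (skipPos_ne_two i)
  simp only [deletion, ofBijective_apply, deleteFun]
  omega

def insertFun (σ : Perm (Fin (m + 1))) (x : Fin (m + 3)) : Fin (m + 3) :=
  if x = 1 then 1 else if x = 2 then 0 else (σ (unskipPos x)).succ.succ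

theorem insertFun_skipPos (σ : Perm (Fin (m + 1))) (i : Fin (m + 1)) :
    insertFun σ (skipPos i) = (σ i).succ.succ := by
  simp [insertFun, skipPos_ne_one, skipPos_ne_two, unskipPos_skipPos]

theorem insertFun_of_ne (σ : Perm (Fin (m + 1))) {x : Fin (m + 3)} (hx1 : x ≠ 1)
    (hx2 : x ≠ 2) :
    insertFun σ x = (σ (unskipPos x)).succ.succ := by
  simp [insertFun, hx1, hx2]

theorem injective_insertFun (σ : Perm (Fin (m + 1))) : Function.Injective (insertFun σ) := by
  have small : ∀ z, z = 1 ∨ z = 2 → (insertFun σ z : ℕ) ≤ 1 := by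
    rintro z (rfl | rfl) <;> simp [insertFun, two_ne_one_fin]
  have large : ∀ z, ¬(z = 1 ∨ z = 2) → 2 ≤ (insertFun σ z : ℕ) := by
    intro z hz
    obtain ⟨hz1, hz2⟩ := not_or.1 hz
    simp [insertFun_of_ne σ hz1 hz2]
  intro x y hxy
  by_cases hx : x = 1 ∨ x = 2 <;> by_cases hy : y = 1 ∨ y = 2
  · rcases hx with rfl | rfl <;> rcases hy with rfl | rfl <;>
      simp [insertFun, two_ne_one_fin] at hxy ⊢
  · have := small x hx
    have := large y hy
    rw [hxy] at *
    omega
  · have := small y hy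
    have := large x hx
    rw [hxy] at *
    omega
  · obtain ⟨hx1, hx2⟩ := not_or.1 hx
    obtain ⟨hy1, hy2⟩ := not_or.1 hy
    rw [insertFun_of_ne σ hx1 hx2, insertFun_of_ne σ hy1 hy2] at hxy
    have := σ.injective (Fin.succ_injective _ (Fin.succ_injective _ hxy))
    rw [← skipPos_unskipPos hx1 hx2, ← skipPos_unskipPos hy1 hy2, this]

noncomputable def insertion (σ : Perm (Fin (m + 1))) : Perm (Fin (m + 3)) :=
  .ofBijective (insertFun σ) (Finite.injective_iff_bijective.mp (injective_insertFun σ))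

theorem isDeletion_insertion (σ : Perm (Fin (m + 1))) : IsDeletion (insertion σ) σ := by
  refine ⟨⟨by simp [insertion, insertFun], by simp [insertion, insertFun, two_ne_one_fin]⟩,
    fun i ↦ ?_⟩
  simp [insertion, insertFun_skipPos]

noncomputable def pinnedEquiv :
    {π : Perm (Fin (m + 3)) // π 1 = 1 ∧ π 2 = 0} ≃ Perm (Fin (m + 1)) where
  toFun π := deletion π.1 π.2
  invFun σ := ⟨insertion σ, (isDeletion_insertion σ).1⟩
  left_inv π := Subtype.ext ((isDeletion_insertion _).left_unique (isDeletion_deletion π.2))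
  right_inv σ := (isDeletion_deletion _).right_unique (isDeletion_insertion σ)

theorem isDeletion_pinnedEquiv (π : {π : Perm (Fin (m + 3)) // π 1 = 1 ∧ π 2 = 0}) :
    IsDeletion π.1 (pinnedEquiv π) :=
  isDeletion_deletion π.2

noncomputable def deletionEquiv :
    {π : Perm (Fin (m + 3)) // AvoidsNonconsec321 π ∧ Dec3 π} ≃
      {σ : Perm (Fin (m + 1)) // AvoidsNonconsec321 σ ∧ ¬Dec3 σ} :=
  (subtypeSubtypeEquivSubtype apply_one_eq_one_and_apply_two_eq_zero).symm.trans
    (pinnedEquiv.subtypeEquiv fun π ↦ (and_iff_left (isDeletion_pinnedEquiv π).dec3).trans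
      (isDeletion_pinnedEquiv π).avoidsNonconsec321_iff)

theorem isDeletion_deletionEquiv
    (π : {π : Perm (Fin (m + 3)) // AvoidsNonconsec321 π ∧ Dec3 π}) :
    IsDeletion π.1 (deletionEquiv π).1 :=
  isDeletion_pinnedEquiv ⟨π.1, apply_one_eq_one_and_apply_two_eq_zero π.2⟩

end Nonconsec321

open Nonconsec321 in
/-- For `n ≥ 3`, deleting the second and third entries (necessarily 2 and 1) and
subtracting 2 from all remaining entries is a bijection from permutations of `{1,…,n}`
avoiding a nonconsecutive 321 pattern and starting with three decreasing entries onto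
permutations of `{1,…,n-2}` avoiding a nonconsecutive 321 pattern and not starting with
three decreasing entries. -/
theorem bijection_B_to_D (n : ℕ) (hn : 3 ≤ n) :
    ∃ e : {π : Equiv.Perm (Fin n) // AvoidsNonconsec321 π ∧ Dec3 π} ≃
          {σ : Equiv.Perm (Fin (n - 2)) // AvoidsNonconsec321 σ ∧ ¬ Dec3 σ},
      ∀ π : {π : Equiv.Perm (Fin n) // AvoidsNonconsec321 π ∧ Dec3 π},
        ((e π).val ⟨0, by omega⟩ : ℕ) = (π.val ⟨0, by omega⟩ : ℕ) - 2 ∧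
        ∀ i : Fin (n - 2), 1 ≤ (i : ℕ) →
          ((e π).val i : ℕ) =
            (π.val ⟨(i : ℕ) + 2, by have := i.isLt; omega⟩ : ℕ) - 2 := by
  obtain ⟨m, rfl⟩ : ∃ m, n = m + 3 := ⟨n - 3, by omega⟩
  refine ⟨deletionEquiv, fun π ↦ ⟨?_, fun i hi ↦ ?_⟩⟩
  · have := (isDeletion_deletionEquiv π).2 0
    rw [skipPos_zero] at this
    exact (Nat.sub_eq_of_eq_add this).symm
  · have := (isDeletion_deletionEquiv π).2 i
    rw [skipPos_of_pos hi] at this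
    exact (Nat.sub_eq_of_eq_add this).symm
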